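/- For every N ≥ 1 the subspace R_N(A) is invariant under π and under 1̂ (i.e., π(R_N(A)) ⊆ R_N(A) and 1̂(R_N(A)) ⊆ R_N(A)), and for every n ≥ 0 the graded component R_N(A) ∩ O(A)^(n) is invariant under both the left and the right S(n)-action, i.e., σ·(R_N(A) ∩ O(A)^(n))·τ ⊆ R_N(A) ∩ O(A)^(n) for all σ, τ ∈ S(n). -/

import Mathlib

noncomputable section

set_option maxHeartbeats 1000000
set_option synthInstance.maxHeartbeats 100000

open TensorProduct PiTensorProduct Equiv Function

variable (k : Type*) [Field k]
variable (A : Type*) [Ring A] [Algebra k A]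

/-- The commutator subspace `[A,A] ⊆ A`. -/
def commSM : Submodule k A := Submodule.span k {x : A | ∃ a b : A, x = a * b - b * a}

/-- `A_♮ = A/[A,A]`. -/
abbrev Anat := A ⧸ commSM k A

/-- The quotient map `A → A_♮`. -/
def qNat : A →ₗ[k] Anat k A := (commSM k A).mkQ

/-- The symmetrizing relation on the tensor algebra of `A_♮`. -/
def symRel : TensorAlgebra k (Anat k A) → TensorAlgebra k (Anat k A) → Prop :=
  fun u v => ∃ x y : TensorAlgebra k (Anat k A), u = x * y ∧ v = y * x

/-- The symmetric algebra `Sym(A_♮)`, realized as the quotient of the tensor algebra of `A_♮`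
by the relations `xy = yx`. -/
abbrev SymA := RingQuot (symRel k A)

/-- The canonical inclusion `A_♮ → Sym(A_♮)`. -/
def iotaSym : Anat k A →ₗ[k] SymA k A :=
  (RingQuot.mkAlgHom k (symRel k A)).toLinearMap ∘ₗ TensorAlgebra.ι k

/-- Tensor powers of `A`. -/
abbrev TP (n : ℕ) := PiTensorProduct k (fun _ : Fin n => A)

/-- The group algebra `k[S(n)]`, as the free `k`-module on `S(n)`. -/
abbrev GrpAlg (n : ℕ) := Equiv.Perm (Fin n) →₀ k

/-- The `n`-th graded component `O(A)^{(n)} = A^{⊗n} ⊗ Sym(A_♮) ⊗ k[S(n)]`. -/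
abbrev OO (n : ℕ) := (TP k A n ⊗[k] SymA k A) ⊗[k] GrpAlg k n

/-- The pure element `(a_1 ⊗ ⋯ ⊗ a_n) ⊗ f ⊗ u` of `O(A)^{(n)}`. -/
def el {n : ℕ} (a : Fin n → A) (f : SymA k A) (u : Equiv.Perm (Fin n)) : OO k A n :=
  (tprod k a ⊗ₜ[k] f) ⊗ₜ[k] Finsupp.single u 1

/-- Build a linear map out of `O(A)^{(n)}` from a family of linear maps on
`A^{⊗n} ⊗ Sym(A_♮)` indexed by permutations. -/
def build {n : ℕ} {M : Type*} [AddCommMonoid M] [Module k M]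
    (F : Equiv.Perm (Fin n) → ((TP k A n ⊗[k] SymA k A) →ₗ[k] M)) :
    OO k A n →ₗ[k] M :=
  TensorProduct.lift
    ((Finsupp.lift ((TP k A n ⊗[k] SymA k A) →ₗ[k] M) k (Equiv.Perm (Fin n)) F).flip)

/-- Splitting off the first tensor factor. -/
def splitFirst (M : Type*) [AddCommGroup M] [Module k M] (n : ℕ) :
    PiTensorProduct k (fun _ : Fin (n+1) => M) ≃ₗ[k]
      M ⊗[k] PiTensorProduct k (fun _ : Fin n => M) :=
  (PiTensorProduct.reindex k (fun _ : Fin (n+1) => M)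
      ((finSumFinEquiv.trans (finCongr (by omega : 1 + n = n + 1))).symm :
        Fin (n+1) ≃ (Fin 1 ⊕ Fin n))).trans
    ((PiTensorProduct.tmulEquiv k M).symm.trans
      (TensorProduct.congr (PiTensorProduct.subsingletonEquiv (0 : Fin 1))
        (LinearEquiv.refl k _)))

/-- Left multiplication into the `s`-th factor of a tensor power of `A`:
`a₀ ⊗ (b_1 ⊗ ⋯ ⊗ b_n) ↦ b_1 ⊗ ⋯ ⊗ (a₀ * b_s) ⊗ ⋯ ⊗ b_n`. -/
def mulInto : ∀ {n : ℕ}, Fin n → (A ⊗[k] TP k A n →ₗ[k] TP k A n)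
  | 0, s => s.elim0
  | (m+1), s =>
    (PiTensorProduct.reindex k (fun _ : Fin (m+1) => A)
        (((Fin.cycleRange s)⁻¹ : Equiv.Perm (Fin (m+1))) : Fin (m+1) ≃ Fin (m+1))).toLinearMap ∘ₗ
    (splitFirst k A m).symm.toLinearMap ∘ₗ
    LinearMap.rTensor (TP k A m) (LinearMap.mul' k A) ∘ₗ
    (TensorProduct.assoc k A A (TP k A m)).symm.toLinearMap ∘ₗ
    LinearMap.lTensor A
      (((PiTensorProduct.reindex k (fun _ : Fin (m+1) => A)
        ((Fin.cycleRange s : Equiv.Perm (Fin (m+1))) : Fin (m+1) ≃ Fin (m+1))).trans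
        (splitFirst k A m)).toLinearMap)

/-- The embedding `S(n) → S(n+1)`, `w ↦ id_1 × w`. -/
def embedSucc {n : ℕ} (w : Equiv.Perm (Fin n)) : Equiv.Perm (Fin (n + 1)) :=
  ((finSuccEquiv n).symm).permCongr (Equiv.optionCongr w)

/-- The canonical projection `S(n+1) → S(n)`, `u ↦ u_*`. -/
def projSucc {n : ℕ} (u : Equiv.Perm (Fin (n + 1))) : Equiv.Perm (Fin n) :=
  Equiv.removeNone (((finSuccEquiv n).symm.trans u).trans (finSuccEquiv n))

/-- Multiplication `A ⊗ Sym(A_♮) → Sym(A_♮)`, `a ⊗ f ↦ ā · f`. -/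
def mulSym : A ⊗[k] SymA k A →ₗ[k] SymA k A :=
  LinearMap.mul' k (SymA k A) ∘ₗ
    LinearMap.rTensor (SymA k A) (iotaSym k A ∘ₗ qNat k A)

/-- Tensoring with a fixed group-algebra basis vector: `x ↦ x ⊗ u`. -/
def withPerm {n : ℕ} (u : Equiv.Perm (Fin n)) :
    (TP k A n ⊗[k] SymA k A) →ₗ[k] OO k A n :=
  (TensorProduct.mk k (TP k A n ⊗[k] SymA k A) (GrpAlg k n)).flip (Finsupp.single u 1)

/-- The case `u(1) = 1` of `π`. -/
def piCaseOne {n : ℕ} (u : Equiv.Perm (Fin (n+1))) :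
    (TP k A (n+1) ⊗[k] SymA k A) →ₗ[k] OO k A n :=
  withPerm k A (projSucc u) ∘ₗ
  LinearMap.lTensor (TP k A n) (mulSym k A) ∘ₗ
  (TensorProduct.leftComm k A (TP k A n) (SymA k A)).toLinearMap ∘ₗ
  (TensorProduct.assoc k A (TP k A n) (SymA k A)).toLinearMap ∘ₗ
  LinearMap.rTensor (SymA k A) (splitFirst k A n).toLinearMap

/-- The case `u(1) = s > 1` of `π`. -/
def piCaseTwo {n : ℕ} (u : Equiv.Perm (Fin (n+1))) (h : u 0 ≠ 0) :
    (TP k A (n+1) ⊗[k] SymA k A) →ₗ[k] OO k A n :=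
  withPerm k A (projSucc u) ∘ₗ
  LinearMap.rTensor (SymA k A) (mulInto k A ((u 0).pred h)) ∘ₗ
  LinearMap.rTensor (SymA k A) (splitFirst k A n).toLinearMap

/-- The map `π : O(A)^{(n+1)} → O(A)^{(n)}`. -/
def piMap {n : ℕ} : OO k A (n+1) →ₗ[k] OO k A n :=
  build k A (fun u => if h : u 0 = 0 then piCaseOne k A u else piCaseTwo k A u h)

/-- Prepending a tensor factor `1`. -/
def consOne {n : ℕ} : TP k A n →ₗ[k] TP k A (n+1) :=
  (splitFirst k A n).symm.toLinearMap ∘ₗ TensorProduct.mk k A (TP k A n) 1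

/-- The map `1̂ : O(A)^{(n)} → O(A)^{(n+1)}`. -/
def oneHat {n : ℕ} : OO k A n →ₗ[k] OO k A (n+1) :=
  build k A (fun u =>
    withPerm k A (embedSucc u) ∘ₗ LinearMap.rTensor (SymA k A) (consOne k A))

/-- The left action of `σ ∈ S(n)` on `O(A)^{(n)}`:
`σ·((a_1⊗…⊗a_n)⊗f⊗τ) = (a_{σ⁻¹(1)}⊗…⊗a_{σ⁻¹(n)})⊗f⊗(στ)`. -/
def lAct {n : ℕ} (σ : Equiv.Perm (Fin n)) : OO k A n →ₗ[k] OO k A n :=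
  build k A (fun u =>
    withPerm k A (σ * u) ∘ₗ
      LinearMap.rTensor (SymA k A)
        (PiTensorProduct.reindex k (fun _ : Fin n => A)
          (σ : Fin n ≃ Fin n)).toLinearMap)

/-- The right action of `σ ∈ S(n)` on `O(A)^{(n)}`:
`((a_1⊗…⊗a_n)⊗f⊗τ)·σ = (a_1⊗…⊗a_n)⊗f⊗(τσ)`. -/
def rAct {n : ℕ} (σ : Equiv.Perm (Fin n)) : OO k A n →ₗ[k] OO k A n :=
  LinearMap.lTensor (TP k A n ⊗[k] SymA k A)
    (Finsupp.lmapDomain k k (fun u : Equiv.Perm (Fin n) => u * σ))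

end

noncomputable section

set_option maxHeartbeats 1000000
set_option synthInstance.maxHeartbeats 400000

open MvPolynomial

variable (k : Type*) [Field k]
variable (A : Type*) [Ring A] [Algebra k A]
variable (N : ℕ)

def repRel : Set (MvPolynomial (A × Fin N × Fin N) k) :=
  {p | (∃ (a b : A) (i j : Fin N), p = X (a + b, i, j) - X (a, i, j) - X (b, i, j)) ∨
       (∃ (c : k) (a : A) (i j : Fin N), p = X (c • a, i, j) - MvPolynomial.C c * X (a, i, j)) ∨
       (∃ (a b : A) (i j : Fin N),
          p = X (a * b, i, j) - ∑ s : Fin N, X (a, i, s) * X (b, s, j)) ∨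
       (∃ i j : Fin N, p = X ((1 : A), i, j) - if i = j then 1 else 0)}

def RepAlg := MvPolynomial (A × Fin N × Fin N) k ⧸ Ideal.span (repRel k A N)

instance : CommRing (RepAlg k A N) :=
  inferInstanceAs (CommRing (MvPolynomial (A × Fin N × Fin N) k ⧸ Ideal.span (repRel k A N)))

instance : Algebra k (RepAlg k A N) :=
  inferInstanceAs (Algebra k (MvPolynomial (A × Fin N × Fin N) k ⧸ Ideal.span (repRel k A N)))

def genL (i j : Fin N) : A →ₗ[k] RepAlg k A N where
  toFun a := Ideal.Quotient.mkₐ k (Ideal.span (repRel k A N)) (X (a, i, j))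
  map_add' a b := by
    have h : (X (a + b, i, j) - (X (a, i, j) + X (b, i, j)) : MvPolynomial (A × Fin N × Fin N) k)
        ∈ Ideal.span (repRel k A N) :=
      Ideal.subset_span (Or.inl ⟨a, b, i, j, by ring⟩)
    show Ideal.Quotient.mkₐ k _ (X (a + b, i, j)) =
      Ideal.Quotient.mkₐ k _ (X (a, i, j)) + Ideal.Quotient.mkₐ k _ (X (b, i, j))
    exact (Ideal.Quotient.eq.mpr h).trans
      (map_add (Ideal.Quotient.mk (Ideal.span (repRel k A N))) _ _)
  map_smul' c a := by
    have h : (X (c • a, i, j) - MvPolynomial.C c * X (a, i, j) :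
        MvPolynomial (A × Fin N × Fin N) k) ∈ Ideal.span (repRel k A N) :=
      Ideal.subset_span (Or.inr (Or.inl ⟨c, a, i, j, by ring⟩))
    show Ideal.Quotient.mkₐ k _ (X (c • a, i, j)) = c • Ideal.Quotient.mkₐ k _ (X (a, i, j))
    refine (Ideal.Quotient.eq.mpr h).trans ?_
    rw [← MvPolynomial.smul_eq_C_mul]
    exact map_smul (Ideal.Quotient.mkₐ k (Ideal.span (repRel k A N))) c (X (a, i, j))

/-- The trace `a ↦ Σ_s a_{ss}`, as a linear map `A → O(Rep_N(A))`. -/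
def trA : A →ₗ[k] RepAlg k A N := ∑ s : Fin N, genL k A N s s

lemma genL_mul (a b : A) (i j : Fin N) :
    genL k A N i j (a * b) =
      ∑ s : Fin N, Ideal.Quotient.mk (Ideal.span (repRel k A N)) (X (a, i, s) * X (b, s, j)) := by
  have h : (X (a * b, i, j) - ∑ s : Fin N, X (a, i, s) * X (b, s, j) :
      MvPolynomial (A × Fin N × Fin N) k) ∈ Ideal.span (repRel k A N) :=
    Ideal.subset_span (Or.inr (Or.inr (Or.inl ⟨a, b, i, j, rfl⟩)))
  have h2 := Ideal.Quotient.eq.mpr h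
  exact h2.trans (map_sum (Ideal.Quotient.mk (Ideal.span (repRel k A N))) _ _)

lemma trA_mul_comm (a b : A) : trA k A N (a * b) = trA k A N (b * a) := by
  have e1 : trA k A N (a * b) = ∑ s : Fin N, ∑ t : Fin N,
      Ideal.Quotient.mk (Ideal.span (repRel k A N)) (X (a, s, t) * X (b, t, s)) := by
    simp only [trA, LinearMap.sum_apply]
    exact Finset.sum_congr rfl fun s _ => genL_mul k A N a b s s
  have e2 : trA k A N (b * a) = ∑ s : Fin N, ∑ t : Fin N,
      Ideal.Quotient.mk (Ideal.span (repRel k A N)) (X (b, s, t) * X (a, t, s)) := by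
    simp only [trA, LinearMap.sum_apply]
    exact Finset.sum_congr rfl fun s _ => genL_mul k A N b a s s
  rw [e1, e2, Finset.sum_comm]
  exact Finset.sum_congr rfl fun s _ => Finset.sum_congr rfl fun t _ => by rw [mul_comm]

/-- The trace descends to `A_♮`. -/
def trNat : Anat k A →ₗ[k] RepAlg k A N :=
  Submodule.liftQ (commSM k A) (trA k A N) (Submodule.span_le.mpr (by
    rintro x ⟨a, b, rfl⟩
    simp only [SetLike.mem_coe, LinearMap.mem_ker, map_sub, trA_mul_comm k A N a b, sub_self]))

/-- The multiplicative extension of the trace to `Sym(A_♮)`. -/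
def trSym : SymA k A →ₐ[k] RepAlg k A N :=
  RingQuot.liftAlgHom k ⟨TensorAlgebra.lift k (trNat k A N), by
    rintro x y ⟨u, v, rfl, rfl⟩
    simp [mul_comm]⟩

/-- The multilinear map `a ↦ ∏_t (a_t)_{i_{u⁻¹(t)}, j_t}`. -/
def prodML {n : ℕ} (u : Equiv.Perm (Fin n)) (i j : Fin n → Fin N) :
    MultilinearMap k (fun _ : Fin n => A) (RepAlg k A N) :=
  (MultilinearMap.mkPiAlgebra k (Fin n) (RepAlg k A N)).compLinearMap
    (fun t => genL k A N (i (u⁻¹ t)) (j t))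

/-- The pairing `α ↦ α_{ij} : O(A)^{(n)} → O(Rep_N(A))`,
`((a_1⊗…⊗a_n)⊗(f_1⋯f_m)⊗u)_{ij} = ∏_t (a_t)_{i_{u⁻¹(t)} j_t} · tr(f_1)⋯tr(f_m)`. -/
def pairRep {n : ℕ} (i j : Fin n → Fin N) : OO k A n →ₗ[k] RepAlg k A N :=
  build k A (fun u =>
    TensorProduct.lift
      ((LinearMap.mul k (RepAlg k A N)).compl₁₂
        (PiTensorProduct.lift (prodML k A N u i j)) (trSym k A N).toLinearMap))

/-- The subspace `R_N(A) ⊆ O(A)^{(n)}` of elements vanishing in the `N`-dimensional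
representations. -/
def RN (n : ℕ) : Submodule k (OO k A n) :=
  ⨅ (i : Fin n → Fin N) (j : Fin n → Fin N), LinearMap.ker (pairRep k A N i j)

end

/-!
Composed with any of the four operations, a pairing `α ↦ α_{ij}` becomes a combination of
pairings: `(α·τ)_{ij} = α_{(i∘τ⁻¹) j}` and `(σ·α)_{ij} = α_{i (j∘σ)}` by reindexing the product,
`(1̂ α)_{ij} = δ_{i₁ j₁} α_{i' j'}` (`i'`, `j'` drop the first entry) because
`(1_A)_{pq} = δ_{pq}`, and `(π α)_{ij} = Σ_t α_{(t,i) (t,j)}`, the sum over `t` coming from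
`tr(ā₁)` when `u(1) = 1` and from `(a₁ a_s)_{pq} = Σ_t (a₁)_{pt} (a_s)_{tq}` when `u(1) > 1`.
So the common kernel `R_N(A)` of all pairings is preserved.
-/

noncomputable section

open TensorProduct PiTensorProduct Equiv Function MvPolynomial

variable (k : Type*) [Field k] (A : Type*) [Ring A] [Algebra k A] (N : ℕ)

lemma build_el {n : ℕ} {M : Type*} [AddCommMonoid M] [Module k M]
    (F : Perm (Fin n) → ((TP k A n ⊗[k] SymA k A) →ₗ[k] M))
    (a : Fin n → A) (f : SymA k A) (u : Perm (Fin n)) :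
    build k A F (el k A a f u) = F u (tprod k a ⊗ₜ[k] f) := by
  simp [build, el]

lemma OO.hom_ext {n : ℕ} {M : Type*} [AddCommMonoid M] [Module k M]
    {F G : OO k A n →ₗ[k] M}
    (h : ∀ (a : Fin n → A) (f : SymA k A) (u : Perm (Fin n)),
      F (el k A a f u) = G (el k A a f u)) : F = G := by
  ext a f u
  simpa [el] using h a f u

lemma splitFirst_tprod {M : Type*} [AddCommGroup M] [Module k M] {n : ℕ} (b : Fin (n+1) → M) :
    splitFirst k M n (tprod k b) = b 0 ⊗ₜ[k] tprod k (Fin.tail b) := by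
  simp only [splitFirst, LinearEquiv.trans_apply, reindex_tprod, tmulEquiv_symm_apply,
    TensorProduct.congr_tmul, subsingletonEquiv_apply_tprod, LinearEquiv.refl_apply]
  congr 3
  ext t
  apply congrArg b
  ext
  simp [finSumFinEquiv, Fin.natAdd, finCongr, Fin.cast]
  omega

lemma splitFirst_symm_tmul_tprod {M : Type*} [AddCommGroup M] [Module k M] {n : ℕ} (x : M)
    (b : Fin n → M) :
    (splitFirst k M n).symm (x ⊗ₜ[k] tprod k b) = tprod k (Fin.cons x b : Fin (n+1) → M) := by
  rw [LinearEquiv.symm_apply_eq, splitFirst_tprod, Fin.cons_zero, Fin.tail_cons]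

lemma consOne_tprod {n : ℕ} (a : Fin n → A) :
    consOne k A (tprod k a) = tprod k (Fin.cons 1 a : Fin (n+1) → A) :=
  splitFirst_symm_tmul_tprod k 1 a

lemma mulInto_tmul_tprod {n : ℕ} (s : Fin n) (x : A) (b : Fin n → A) :
    mulInto k A s (x ⊗ₜ[k] tprod k b) = tprod k (update b s (x * b s)) := by
  cases n with
  | zero => exact s.elim0
  | succ m =>
    simp only [mulInto, LinearMap.comp_apply, LinearMap.lTensor_tmul, LinearEquiv.coe_coe,
      LinearEquiv.trans_apply, reindex_tprod, splitFirst_tprod, TensorProduct.assoc_symm_tmul,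
      LinearMap.rTensor_tmul, LinearMap.mul'_apply, splitFirst_symm_tmul_tprod,
      Perm.inv_def, symm_symm]
    congr 1
    ext t
    rcases eq_or_ne t s with rfl | hts
    · simp
    · obtain ⟨m, hm⟩ : ∃ m : Fin m, Fin.cycleRange s t = m.succ :=
        Fin.eq_succ_of_ne_zero fun h0 => hts (by simpa using congrArg (Fin.cycleRange s).symm h0)
      rw [update_of_ne hts, hm, Fin.cons_succ, Fin.tail, ← hm, Equiv.symm_apply_apply]

lemma embedSucc_zero {n : ℕ} (u : Perm (Fin n)) : embedSucc u 0 = 0 := by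
  simp [embedSucc, permCongr_apply]

lemma embedSucc_succ {n : ℕ} (u : Perm (Fin n)) (t : Fin n) :
    embedSucc u t.succ = (u t).succ := by
  simp [embedSucc, permCongr_apply, finSuccEquiv_succ, finSuccEquiv_symm_some]

lemma embedSucc_inv {n : ℕ} (u : Perm (Fin n)) : (embedSucc u)⁻¹ = embedSucc u⁻¹ := by
  ext t
  simp [embedSucc, Perm.inv_def, permCongr, optionCongr_symm, equivCongr]

lemma succ_projSucc_apply {n : ℕ} (u : Perm (Fin (n+1))) (t : Fin n) :
    (projSucc u t).succ = if u t.succ = 0 then u 0 else u t.succ := by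
  rw [← finSuccEquiv_symm_some, projSucc]
  split_ifs with h
  · rw [removeNone_none _ (by simp [finSuccEquiv_symm_some, h])]
    simp
  · rw [removeNone_some _ ⟨(u t.succ).pred h, by simp [finSuccEquiv_symm_some]⟩]
    simp [finSuccEquiv_symm_some]

lemma projSucc_inv {n : ℕ} (u : Perm (Fin (n+1))) : (projSucc u)⁻¹ = projSucc u⁻¹ := by
  rw [Perm.inv_def, projSucc, removeNone_symm]
  rfl

lemma oneHat_el {n : ℕ} (a : Fin n → A) (f : SymA k A) (u : Perm (Fin n)) :
    oneHat k A (el k A a f u) = el k A (Fin.cons 1 a) f (embedSucc u) := by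
  rw [oneHat, build_el]
  simp [withPerm, consOne_tprod, el]

lemma lAct_el {n : ℕ} (σ : Perm (Fin n)) (a : Fin n → A) (f : SymA k A) (u : Perm (Fin n)) :
    lAct k A σ (el k A a f u) = el k A (fun t => a (σ⁻¹ t)) f (σ * u) := by
  simp only [lAct, build_el, LinearMap.comp_apply, LinearMap.rTensor_tmul,
    LinearEquiv.coe_toLinearMap, reindex_tprod]
  rfl

lemma rAct_el {n : ℕ} (τ : Perm (Fin n)) (a : Fin n → A) (f : SymA k A) (u : Perm (Fin n)) :
    rAct k A τ (el k A a f u) = el k A a f (u * τ) := by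
  simp [rAct, el, Finsupp.lmapDomain, Finsupp.mapDomain_single]

lemma piMap_el_of_eq_zero {n : ℕ} (a : Fin (n+1) → A) (f : SymA k A) (u : Perm (Fin (n+1)))
    (h : u 0 = 0) :
    piMap k A (el k A a f u) =
      el k A (Fin.tail a) (iotaSym k A (qNat k A (a 0)) * f) (projSucc u) := by
  simp only [piMap, build_el, dif_pos h, piCaseOne, LinearMap.comp_apply, LinearMap.rTensor_tmul,
    LinearEquiv.coe_toLinearMap, splitFirst_tprod, TensorProduct.assoc_tmul,
    TensorProduct.leftComm_tmul, LinearMap.lTensor_tmul, mulSym, LinearMap.mul'_apply]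
  rfl

lemma piMap_el_of_ne_zero {n : ℕ} (a : Fin (n+1) → A) (f : SymA k A) (u : Perm (Fin (n+1)))
    (h : u 0 ≠ 0) :
    piMap k A (el k A a f u) =
      el k A (update (Fin.tail a) ((u 0).pred h) (a 0 * a (u 0))) f (projSucc u) := by
  simp only [piMap, build_el, dif_neg h, piCaseTwo, LinearMap.comp_apply, LinearMap.rTensor_tmul,
    LinearEquiv.coe_toLinearMap, splitFirst_tprod, mulInto_tmul_tprod, Fin.tail, Fin.succ_pred]
  rfl

lemma pairRep_el {n : ℕ} (i j : Fin n → Fin N) (a : Fin n → A) (f : SymA k A) (u : Perm (Fin n)) :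
    pairRep k A N i j (el k A a f u) =
      (∏ t, genL k A N (i (u⁻¹ t)) (j t) (a t)) * trSym k A N f := by
  simp [pairRep, build_el, prodML]

lemma genL_one (i j : Fin N) : genL k A N i j 1 = if i = j then 1 else 0 := by
  have hrel : (X ((1 : A), i, j) - (if i = j then 1 else 0) : MvPolynomial (A × Fin N × Fin N) k)
      ∈ Ideal.span (repRel k A N) :=
    Ideal.subset_span (Or.inr (Or.inr (Or.inr ⟨i, j, rfl⟩)))
  refine (Ideal.Quotient.eq.mpr hrel).trans ?_
  split_ifs
  exacts [map_one _, map_zero _]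

lemma genL_mul_eq_sum (a b : A) (i j : Fin N) :
    genL k A N i j (a * b) = ∑ s, genL k A N i s a * genL k A N s j b := by
  rw [genL_mul]
  simp only [map_mul]
  rfl

lemma trSym_iotaSym_qNat (a : A) :
    trSym k A N (iotaSym k A (qNat k A a)) = ∑ s, genL k A N s s a := by
  simp [trSym, iotaSym, trNat, qNat, trA]

lemma mem_RN_iff {n : ℕ} (α : OO k A n) :
    α ∈ RN k A N n ↔ ∀ i j : Fin n → Fin N, pairRep k A N i j α = 0 := by
  simp [RN, Submodule.mem_iInf]

lemma pairRep_comp_rAct {n : ℕ} (i j : Fin n → Fin N) (τ : Perm (Fin n)) :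
    pairRep k A N i j ∘ₗ rAct k A τ = pairRep k A N (i ∘ ⇑τ⁻¹) j := by
  refine OO.hom_ext k A fun a f u => ?_
  simp only [LinearMap.comp_apply, rAct_el, pairRep_el, mul_inv_rev, Perm.mul_apply, comp_apply]

lemma pairRep_comp_lAct {n : ℕ} (i j : Fin n → Fin N) (σ : Perm (Fin n)) :
    pairRep k A N i j ∘ₗ lAct k A σ = pairRep k A N i (j ∘ σ) := by
  refine OO.hom_ext k A fun a f u => ?_
  simp only [LinearMap.comp_apply, lAct_el, pairRep_el]
  rw [← Equiv.prod_comp σ]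
  simp [mul_inv_rev, Perm.mul_apply]

lemma pairRep_comp_oneHat {n : ℕ} (i j : Fin (n+1) → Fin N) :
    pairRep k A N i j ∘ₗ oneHat k A =
      if i 0 = j 0 then pairRep k A N (Fin.tail i) (Fin.tail j) else 0 := by
  refine OO.hom_ext k A fun a f u => ?_
  simp only [LinearMap.comp_apply, oneHat_el, pairRep_el, Fin.prod_univ_succ, embedSucc_inv,
    embedSucc_zero, embedSucc_succ, Fin.cons_zero, Fin.cons_succ, genL_one]
  split_ifs <;> simp [pairRep_el, Fin.tail]

lemma cons_apply_inv_succ {β : Type*} {n : ℕ} (x : β) (i : Fin n → β) (u : Perm (Fin (n+1)))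
    (t : Fin n) (ht : u⁻¹ t.succ ≠ 0) :
    (Fin.cons x i : Fin (n+1) → β) (u⁻¹ t.succ) = i ((projSucc u)⁻¹ t) := by
  have hsucc : ((projSucc u)⁻¹ t).succ = u⁻¹ t.succ := by
    rw [projSucc_inv, succ_projSucc_apply, if_neg ht]
  rw [← hsucc, Fin.cons_succ]

lemma pairRep_piMap_el_of_eq_zero {n : ℕ} (i j : Fin n → Fin N) (a : Fin (n+1) → A)
    (f : SymA k A) (u : Perm (Fin (n+1))) (h : u 0 = 0) :
    pairRep k A N i j (piMap k A (el k A a f u)) =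
      ∑ s, pairRep k A N (Fin.cons s i) (Fin.cons s j) (el k A a f u) := by
  have hu0 : u⁻¹ 0 = 0 := by rw [Perm.inv_eq_iff_eq, h]
  have hI (s : Fin N) (t : Fin n) :
      (Fin.cons s i : Fin (n+1) → Fin N) (u⁻¹ t.succ) = i ((projSucc u)⁻¹ t) :=
    cons_apply_inv_succ s i u t (by rw [Ne, Perm.inv_eq_iff_eq, h]; exact Fin.succ_ne_zero t)
  simp only [piMap_el_of_eq_zero k A a f u h, pairRep_el, map_mul, trSym_iotaSym_qNat,
    Fin.prod_univ_succ, hu0, hI, Fin.cons_zero, Fin.cons_succ, Fin.tail, Finset.mul_sum,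
    Finset.sum_mul]
  exact Finset.sum_congr rfl fun s _ => by ring

lemma pairRep_piMap_el_of_ne_zero {n : ℕ} (i j : Fin n → Fin N) (a : Fin (n+1) → A)
    (f : SymA k A) (u : Perm (Fin (n+1))) (h : u 0 ≠ 0) :
    pairRep k A N i j (piMap k A (el k A a f u)) =
      ∑ s, pairRep k A N (Fin.cons s i) (Fin.cons s j) (el k A a f u) := by
  set r := (u 0).pred h
  have hr : r.succ = u 0 := Fin.succ_pred _ _
  have hur : u⁻¹ r.succ = 0 := by rw [hr, Perm.inv_eq_iff_eq]
  have hI0 (s : Fin N) : (Fin.cons s i : Fin (n+1) → Fin N) (u⁻¹ 0) = i ((projSucc u)⁻¹ r) := by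
    have hsucc : ((projSucc u)⁻¹ r).succ = u⁻¹ 0 := by
      rw [projSucc_inv, succ_projSucc_apply, if_pos hur]
    rw [← hsucc, Fin.cons_succ]
  have hI (s : Fin N) (t : Fin n) (ht : t ≠ r) :
      (Fin.cons s i : Fin (n+1) → Fin N) (u⁻¹ t.succ) = i ((projSucc u)⁻¹ t) := by
    refine cons_apply_inv_succ s i u t fun h0 => ht (Fin.succ_injective _ ?_)
    rw [hr, ← Perm.inv_eq_iff_eq, h0]
  rw [piMap_el_of_ne_zero k A a f u h, pairRep_el, ← Finset.mul_prod_erase _ _ (Finset.mem_univ r),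
    update_self, genL_mul_eq_sum, Finset.sum_mul, Finset.sum_mul]
  refine Finset.sum_congr rfl fun s _ => ?_
  rw [pairRep_el, Fin.prod_univ_succ, ← Finset.mul_prod_erase _ _ (Finset.mem_univ r), hI0,
    Fin.cons_zero, hur, Fin.cons_zero, Fin.cons_succ, hr]
  have hrest : ∏ t ∈ Finset.univ.erase r,
        genL k A N (i ((projSucc u)⁻¹ t)) (j t) (update (Fin.tail a) r (a 0 * a (u 0)) t) =
      ∏ t ∈ Finset.univ.erase r,
        genL k A N ((Fin.cons s i : Fin (n+1) → Fin N) (u⁻¹ t.succ))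
          ((Fin.cons s j : Fin (n+1) → Fin N) t.succ) (a t.succ) :=
    Finset.prod_congr rfl fun t ht => by
      rw [hI s t (Finset.ne_of_mem_erase ht), update_of_ne (Finset.ne_of_mem_erase ht),
        Fin.cons_succ, Fin.tail]
  rw [hrest]
  ring

lemma pairRep_comp_piMap {n : ℕ} (i j : Fin n → Fin N) :
    pairRep k A N i j ∘ₗ piMap k A = ∑ s, pairRep k A N (Fin.cons s i) (Fin.cons s j) := by
  refine OO.hom_ext k A fun a f u => ?_
  rw [LinearMap.comp_apply, LinearMap.sum_apply]
  by_cases h : u 0 = 0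
  · exact pairRep_piMap_el_of_eq_zero k A N i j a f u h
  · exact pairRep_piMap_el_of_ne_zero k A N i j a f u h

variable {k A N}

lemma piMap_mem_RN {n : ℕ} {α : OO k A (n+1)} (hα : α ∈ RN k A N (n+1)) :
    piMap k A α ∈ RN k A N n := by
  rw [mem_RN_iff] at hα ⊢
  intro i j
  rw [← LinearMap.comp_apply, pairRep_comp_piMap, LinearMap.sum_apply]
  exact Finset.sum_eq_zero fun s _ => hα _ _

lemma oneHat_mem_RN {n : ℕ} {α : OO k A n} (hα : α ∈ RN k A N n) :
    oneHat k A α ∈ RN k A N (n+1) := by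
  rw [mem_RN_iff] at hα ⊢
  intro i j
  rw [← LinearMap.comp_apply, pairRep_comp_oneHat]
  split_ifs
  exacts [hα _ _, rfl]

lemma lAct_mem_RN {n : ℕ} (σ : Perm (Fin n)) {α : OO k A n} (hα : α ∈ RN k A N n) :
    lAct k A σ α ∈ RN k A N n := by
  rw [mem_RN_iff] at hα ⊢
  intro i j
  rw [← LinearMap.comp_apply, pairRep_comp_lAct]
  exact hα _ _

lemma rAct_mem_RN {n : ℕ} (τ : Perm (Fin n)) {α : OO k A n} (hα : α ∈ RN k A N n) :
    rAct k A τ α ∈ RN k A N n := by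
  rw [mem_RN_iff] at hα ⊢
  intro i j
  rw [← LinearMap.comp_apply, pairRep_comp_rAct]
  exact hα _ _

end

theorem RN_invariant_general (k : Type*) [Field k]
    (A : Type*) [Ring A] [Algebra k A] (N : ℕ) :
    (∀ (n : ℕ) (α : OO k A (n + 1)), α ∈ RN k A N (n + 1) → piMap k A α ∈ RN k A N n) ∧
    (∀ (n : ℕ) (α : OO k A n), α ∈ RN k A N n → oneHat k A α ∈ RN k A N (n + 1)) ∧
    (∀ (n : ℕ) (σ τ : Equiv.Perm (Fin n)) (α : OO k A n),
        α ∈ RN k A N n → lAct k A σ (rAct k A τ α) ∈ RN k A N n) :=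
  ⟨fun _ _ => piMap_mem_RN, fun _ _ => oneHat_mem_RN,
    fun _ σ τ _ hα => lAct_mem_RN σ (rAct_mem_RN τ hα)⟩

theorem RN_invariant (k : Type*) [Field k] [IsAlgClosed k] [CharZero k]
    (A : Type*) [Ring A] [Algebra k A] (N : ℕ) (hN : 1 ≤ N) :
    (∀ (n : ℕ) (α : OO k A (n + 1)), α ∈ RN k A N (n + 1) → piMap k A α ∈ RN k A N n) ∧
    (∀ (n : ℕ) (α : OO k A n), α ∈ RN k A N n → oneHat k A α ∈ RN k A N (n + 1)) ∧
    (∀ (n : ℕ) (σ τ : Equiv.Perm (Fin n)) (α : OO k A n),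
        α ∈ RN k A N n → lAct k A σ (rAct k A τ α) ∈ RN k A N n) :=
  RN_invariant_general k A N
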